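/- Let Q ∈ ℝ^{n×n}, c ∈ ℝⁿ, A ∈ ℝ^{m×n}, and let x⁰ ∈ ℝⁿ with x⁰ ≥ 0. Then the infimum of ‖Q − Q̄‖_f² + ‖c − c̄‖² over all (Q̄, c̄, y, s) satisfying Aᵀy + s − Q̄x⁰ = c̄, (x⁰)ᵀs = 0, s ≥ 0 is attained: there exist Q̄* ∈ ℝ^{n×n}, c̄* ∈ ℝⁿ, y* ∈ ℝ^m, s* ∈ ℝⁿ feasible for these constraints achieving the minimum value. -/

import Mathlib

/-!
The feasible pairs `(Q̄, c̄)` of (IQP) are those with `c̄ + Q̄ x⁰ ∈ K`, where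
`K = {Aᵀ y + s | s ≥ 0, (x⁰)ᵀ s = 0}`. Since `x⁰ ≥ 0`, complementarity only forces the coordinates
of `s` with `x⁰ᵢ > 0` to vanish, so `K` is the linear image of a face of a nonnegative orthant.
Such images are closed by a conic Carathéodory argument: if the map is injective on the span of
the face it is a closed embedding there; otherwise moving along a kernel vector empties a
coordinate, and the image is a finite union of images of smaller faces. Hence the feasible set is
closed and nonempty, and the objective, a squared Euclidean distance to `(Q, c)`, attains its
minimum on it.
-/

open Matrix

section Orthant

variable {ι : Type*} [Fintype ι]

theorem exists_nonneg_sub_smul_eq_zero {𝕜 : Type*} [Field 𝕜] [LinearOrder 𝕜]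
    [IsStrictOrderedRing 𝕜] (t g : ι → 𝕜) (ht : 0 ≤ t) (hg : ∃ i, 0 < g i) :
    ∃ i, 0 < g i ∧ ∃ α : 𝕜, 0 ≤ t - α • g ∧ (t - α • g) i = 0 := by
  classical
  obtain ⟨i, hi, hmin⟩ := (Finset.univ.filter (0 < g ·)).exists_min_image (fun i => t i / g i)
    (by simpa [Finset.Nonempty] using hg)
  rw [Finset.mem_filter] at hi
  refine ⟨i, hi.2, t i / g i, fun j => ?_, by simp [div_mul_cancel₀ _ hi.2.ne']⟩
  rw [Pi.zero_apply, Pi.sub_apply, Pi.smul_apply, smul_eq_mul, sub_nonneg]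
  rcases lt_or_ge 0 (g j) with hj | hj
  · exact (le_div_iff₀ hj).1 (hmin j (by simpa using hj))
  · exact (mul_nonpos_of_nonneg_of_nonpos (div_nonneg (ht i) hi.2.le) hj).trans (ht j)

theorem dotProduct_eq_zero_iff_of_nonneg {R : Type*} [Semiring R] [PartialOrder R]
    [IsOrderedRing R] [NoZeroDivisors R] {x s : ι → R} (hx : 0 ≤ x) (hs : 0 ≤ s) :
    x ⬝ᵥ s = 0 ↔ ∀ j, x j = 0 ∨ s j = 0 := by
  simp [dotProduct, Finset.sum_eq_zero_iff_of_nonneg fun j _ => mul_nonneg (hx j) (hs j)]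

variable {E : Type*} [AddCommGroup E] [Module ℝ E] [TopologicalSpace E] [IsTopologicalAddGroup E]
  [ContinuousSMul ℝ E] [T2Space E]

theorem LinearMap.isClosed_image_nonneg_support_subset (f : (ι → ℝ) →ₗ[ℝ] E) (s : Finset ι) :
    IsClosed (f '' {t | 0 ≤ t ∧ t.support ⊆ s}) := by
  classical
  induction s using Finset.strongInduction with
  | H s ih =>
  let V : Submodule ℝ (ι → ℝ) := Submodule.pi (↑s)ᶜ fun _ => ⊥
  have hV : ∀ t, t ∈ V ↔ t.support ⊆ s := by
    intro t
    rw [Function.support_subset_iff']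
    simp [V, Submodule.mem_pi]
  by_cases hinj : Disjoint V (LinearMap.ker f)
  · have hemb : Topology.IsClosedEmbedding (f.domRestrict V) :=
      LinearMap.isClosedEmbedding_of_injective
        (LinearMap.ker_eq_bot.2 (LinearMap.injective_domRestrict_iff.2 hinj))
    have himage :
        f '' {t | 0 ≤ t ∧ t.support ⊆ s} = f.domRestrict V '' {v | 0 ≤ (v : ι → ℝ)} := by
      ext x
      constructor
      · rintro ⟨t, ⟨ht, hts⟩, rfl⟩
        exact ⟨⟨t, (hV t).2 hts⟩, ht, rfl⟩
      · rintro ⟨⟨t, htV⟩, ht, rfl⟩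
        exact ⟨t, ⟨ht, (hV t).1 htV⟩, rfl⟩
    rw [himage]
    exact hemb.isClosedMap _ (isClosed_le continuous_const continuous_subtype_val)
  · obtain ⟨g, hgV, hgker, i, hgi⟩ : ∃ g ∈ V, f g = 0 ∧ ∃ i, 0 < g i := by
      rw [Submodule.disjoint_def] at hinj
      push Not at hinj
      obtain ⟨g, hgV, hgker, hg0⟩ := hinj
      obtain ⟨i, hi⟩ := Function.ne_iff.1 hg0
      rcases hi.lt_or_gt with hneg | hpos
      · exact ⟨-g, V.neg_mem hgV, by simpa using hgker, i, by simpa using hneg⟩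
      · exact ⟨g, hgV, hgker, i, hpos⟩
    have hunion : f '' {t | 0 ≤ t ∧ t.support ⊆ s} =
        ⋃ i ∈ s, f '' {t | 0 ≤ t ∧ t.support ⊆ s.erase i} := by
      refine subset_antisymm ?_ (Set.iUnion₂_subset fun i _ =>
        Set.image_mono fun t ht => ⟨ht.1, ht.2.trans (Finset.coe_subset.2 (s.erase_subset i))⟩)
      rintro _ ⟨t, ⟨ht, hts⟩, rfl⟩
      obtain ⟨j, hgj, α, hnonneg, hzero⟩ := exists_nonneg_sub_smul_eq_zero t g ht ⟨i, hgi⟩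
      have hgs : g.support ⊆ s := (hV g).1 hgV
      refine Set.mem_biUnion (hgs hgj.ne') ⟨t - α • g, ⟨hnonneg, ?_⟩, by simp [hgker]⟩
      rw [Function.support_subset_iff']
      intro k hk
      rw [Finset.coe_erase, Set.mem_sdiff, not_and_not_right, Set.mem_singleton_iff] at hk
      by_cases hks : k ∈ s
      · rw [hk hks, hzero]
      · simp [Function.notMem_support.1 (mt (@hts k) hks),
          Function.notMem_support.1 (mt (@hgs k) hks)]
    rw [hunion]
    exact isClosed_biUnion_finset fun i hi => ih _ (Finset.erase_ssubset hi)

end Orthant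

theorem exists_sum_sq_sub_le_of_isClosed {κ : Type*} [Fintype κ] {W : Set (κ → ℝ)}
    (hW : IsClosed W) (hne : W.Nonempty) (u : κ → ℝ) :
    ∃ w ∈ W, ∀ w' ∈ W, ∑ k, (u k - w k) ^ 2 ≤ ∑ k, (u k - w' k) ^ 2 := by
  have hW' : IsClosed (WithLp.ofLp ⁻¹' W : Set (EuclideanSpace ℝ κ)) :=
    hW.preimage (PiLp.continuous_ofLp 2 _)
  obtain ⟨w₀, hw₀⟩ := hne
  obtain ⟨w, hw, hdist⟩ :=
    hW'.exists_infDist_eq_dist ⟨WithLp.toLp 2 w₀, hw₀⟩ (WithLp.toLp 2 u)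
  have hsq (v : EuclideanSpace ℝ κ) : dist (WithLp.toLp 2 u) v ^ 2 = ∑ k, (u k - v k) ^ 2 := by
    rw [EuclideanSpace.dist_eq, Real.sq_sqrt (by positivity)]
    simp [Real.dist_eq, sq_abs]
  refine ⟨w.ofLp, hw, fun w' hw' => ?_⟩
  have hle : dist (WithLp.toLp 2 u) w ≤ dist (WithLp.toLp 2 u) (WithLp.toLp 2 w') :=
    hdist ▸ Metric.infDist_le_dist_of_mem (show WithLp.toLp 2 w' ∈ _ from hw')
  simpa [hsq] using pow_le_pow_left₀ dist_nonneg hle 2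

def kktCone {m n : Type*} [Fintype m] [Fintype n] (A : Matrix m n ℝ) (x0 : n → ℝ) :
    Set (n → ℝ) :=
  {d | ∃ y s, Aᵀ *ᵥ y + s = d ∧ x0 ⬝ᵥ s = 0 ∧ 0 ≤ s}

theorem isClosed_kktCone {m n : Type*} [Fintype m] [Fintype n] (A : Matrix m n ℝ) {x0 : n → ℝ}
    (hx0 : 0 ≤ x0) : IsClosed (kktCone A x0) := by
  classical
  -- `y = y⁺ - y⁻` with both parts nonnegative
  let F : ((m ⊕ m) ⊕ n → ℝ) →ₗ[ℝ] (n → ℝ) :=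
    Aᵀ.mulVecLin ∘ₗ (LinearMap.funLeft ℝ ℝ (Sum.inl ∘ Sum.inl) -
      LinearMap.funLeft ℝ ℝ (Sum.inl ∘ Sum.inr)) + LinearMap.funLeft ℝ ℝ Sum.inr
  let S : Finset ((m ⊕ m) ⊕ n) := Finset.univ.filter fun k => ∀ j, k = Sum.inr j → x0 j = 0
  suffices kktCone A x0 = F '' {t | 0 ≤ t ∧ t.support ⊆ S} from
    this ▸ F.isClosed_image_nonneg_support_subset S
  ext d
  constructor
  · rintro ⟨y, s, rfl, hxs, hs⟩
    refine ⟨Sum.elim (Sum.elim y⁺ y⁻) s, ⟨?_, ?_⟩, ?_⟩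
    · rintro ((k | k) | j)
      · exact posPart_nonneg y k
      · exact negPart_nonneg y k
      · exact hs j
    · rw [Function.support_subset_iff']
      rintro ((k | k) | j) hk
      · simp [S] at hk
      · simp [S] at hk
      · simp only [S, Finset.coe_filter, Finset.mem_univ, true_and, Set.mem_ofPred_eq,
          Sum.inr.injEq, forall_eq'] at hk
        exact ((dotProduct_eq_zero_iff_of_nonneg hx0 hs).1 hxs j).resolve_left hk
    · change Aᵀ *ᵥ (y⁺ - y⁻) + s = _
      rw [posPart_sub_negPart]
  · rintro ⟨t, ⟨ht, htS⟩, rfl⟩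
    refine ⟨t ∘ Sum.inl ∘ Sum.inl - t ∘ Sum.inl ∘ Sum.inr, t ∘ Sum.inr, rfl,
      (dotProduct_eq_zero_iff_of_nonneg hx0 fun j => ht _).2 fun j => ?_, fun j => ht _⟩
    refine or_iff_not_imp_left.2 fun hj => Function.notMem_support.1 fun hmem => ?_
    simpa [S, hj] using htS hmem

theorem mem_kktCone_iff {m n : Type*} [Fintype m] [Fintype n] {A : Matrix m n ℝ} {x0 : n → ℝ}
    {Qbar : Matrix n n ℝ} {cbar : n → ℝ} :
    cbar + Qbar *ᵥ x0 ∈ kktCone A x0 ↔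
      ∃ y s, Aᵀ *ᵥ y + s - Qbar *ᵥ x0 = cbar ∧ x0 ⬝ᵥ s = 0 ∧ 0 ≤ s := by
  simp only [kktCone, Set.mem_ofPred_eq, sub_eq_iff_eq_add]

/-- The infimum in the inverse KKT problem (IQP) at a point `x⁰ ≥ 0`
is attained: there exists a feasible tuple `(Q̄*, c̄*, y*, s*)` whose objective value
`‖Q − Q̄*‖_f² + ‖c − c̄*‖²` is minimal among all feasible tuples. -/
theorem IQP_min_attained (n m : ℕ) (Q : Matrix (Fin n) (Fin n) ℝ) (c : Fin n → ℝ)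
    (A : Matrix (Fin m) (Fin n) ℝ) (x0 : Fin n → ℝ) (hx0 : 0 ≤ x0) :
    ∃ (Qbar : Matrix (Fin n) (Fin n) ℝ) (cbar : Fin n → ℝ)
      (y : Fin m → ℝ) (s : Fin n → ℝ),
      (Aᵀ.mulVec y + s - Qbar.mulVec x0 = cbar ∧ x0 ⬝ᵥ s = 0 ∧ 0 ≤ s) ∧
      ∀ (Qbar' : Matrix (Fin n) (Fin n) ℝ) (cbar' : Fin n → ℝ)
        (y' : Fin m → ℝ) (s' : Fin n → ℝ),
        (Aᵀ.mulVec y' + s' - Qbar'.mulVec x0 = cbar' ∧ x0 ⬝ᵥ s' = 0 ∧ 0 ≤ s') →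
        (∑ i, ∑ j, (Q i j - Qbar i j) ^ 2) + ∑ i, (c i - cbar i) ^ 2 ≤
          (∑ i, ∑ j, (Q i j - Qbar' i j) ^ 2) + ∑ i, (c i - cbar' i) ^ 2 := by
  let toVec (M : Matrix (Fin n) (Fin n) ℝ) (v : Fin n → ℝ) : (Fin n × Fin n) ⊕ Fin n → ℝ :=
    Sum.elim (fun p => M p.1 p.2) v
  let ofVec (w : (Fin n × Fin n) ⊕ Fin n → ℝ) : Matrix (Fin n) (Fin n) ℝ :=
    of fun i j => w (.inl (i, j))
  let W := {w | w ∘ Sum.inr + ofVec w *ᵥ x0 ∈ kktCone A x0}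
  have hW : IsClosed W := (isClosed_kktCone A hx0).preimage (by fun_prop)
  have hW0 : 0 ∈ W := ⟨0, 0, by simp [ofVec, funext_iff, mulVec, dotProduct]⟩
  obtain ⟨w, hw, hmin⟩ := exists_sum_sq_sub_le_of_isClosed hW ⟨0, hW0⟩ (toVec Q c)
  obtain ⟨y, s, hfeas⟩ := mem_kktCone_iff.1 hw
  refine ⟨ofVec w, w ∘ Sum.inr, y, s, hfeas, fun Qbar' cbar' y' s' hfeas' => ?_⟩
  have hmin' := hmin (toVec Qbar' cbar') (mem_kktCone_iff.2 ⟨y', s', hfeas'⟩)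
  simpa [toVec, ofVec, Fintype.sum_sum_type, Fintype.sum_prod_type] using hmin'
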